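/- Consider a greedy sequential allocation over a finite set A of k arms with budget n rounds: given arbitrary positive weights U_{t,i} > 0 for each round t ∈ {1,…,n} and arm i ∈ A, in each round t the pulled arm I_t is any arm maximizing U_{t,i}/N_{t,i} over i ∈ A, where N_{t,i} is the number of pulls of arm i before round t (convention U_{t,i}/0 = +∞). Let N_i be the total pulls of arm i, let J be an arm with maximal total pulls N_J, and let ℓ be the last round with I_ℓ = J. Then for every arm i ∈ A, N_i ≥ (U_{ℓ,i}/U_{ℓ,J}) · (n/k − 1). -/

import Mathlib

open Finset
open scoped ENNReal

/-!
Let `c` be the number of pulls of the most pulled arm `J` before its last pull `ℓ`, so that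
`N_J = c + 1`. Pigeonhole over the `k` arms gives `n ≤ k (c + 1)`, i.e. `c ≥ n / k - 1`, and the
greedy choice of `J` at round `ℓ` gives `U_{ℓ,i} / N_{ℓ,i} ≤ U_{ℓ,J} / c`, i.e.
`N_i ≥ N_{ℓ,i} ≥ (U_{ℓ,i} / U_{ℓ,J}) c`.
-/

/-- Valid also for zero denominators, where `ℝ≥0∞` has `x / 0 = ∞` for `x ≠ 0` and `0 / 0 = 0`. -/
theorem ENNReal.mul_le_mul_of_ofReal_div_natCast_le {a b : ℝ} {m c : ℕ} (hb : 0 ≤ b)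
    (h : ENNReal.ofReal a / m ≤ ENNReal.ofReal b / c) : a * c ≤ b * m := by
  rcases c.eq_zero_or_pos with rfl | hc
  · simpa using mul_nonneg hb m.cast_nonneg
  have hfin : ENNReal.ofReal b / c ≠ ∞ :=
    ENNReal.div_ne_top ENNReal.ofReal_ne_top (by simpa using hc.ne')
  rcases m.eq_zero_or_pos with rfl | hm
  · rcases le_or_gt a 0 with ha | ha
    · simpa using mul_nonpos_of_nonpos_of_nonneg ha c.cast_nonneg
    · simp [ENNReal.div_zero (ENNReal.ofReal_pos.2 ha).ne', hfin] at h
  rw [← ENNReal.ofReal_natCast, ← ENNReal.ofReal_natCast c,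
    ← ENNReal.ofReal_div_of_pos (by exact_mod_cast hm),
    ← ENNReal.ofReal_div_of_pos (by exact_mod_cast hc),
    ENNReal.ofReal_le_ofReal_iff (div_nonneg hb c.cast_nonneg),
    div_le_div_iff₀ (by exact_mod_cast hm) (by exact_mod_cast hc)] at h
  exact h

namespace Greedy

variable {ι : Type*} [DecidableEq ι] (I : ℕ → ι)

def pullCount (t : ℕ) (i : ι) : ℕ := #{m ∈ range t | I m = i}

theorem pullCount_mono {s t : ℕ} (hst : s ≤ t) (i : ι) : pullCount I s i ≤ pullCount I t i :=
  card_le_card (filter_subset_filter _ (range_subset_range.2 hst))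

theorem sum_pullCount [Fintype ι] (t : ℕ) : ∑ i, pullCount I t i = t := by
  simpa [pullCount] using (card_eq_sum_card_fiberwise (f := I) (s := range t) (t := univ)
    fun _ _ => mem_univ _).symm

theorem pullCount_eq_succ_of_last {l n : ℕ} {j : ι} (hl : l < n) (hlj : I l = j)
    (hlast : ∀ t, l < t → t < n → I t ≠ j) : pullCount I n j = pullCount I l j + 1 := by
  have hrange : {m ∈ range n | I m = j} = {m ∈ range (l + 1) | I m = j} := by
    ext m
    simp only [mem_filter, mem_range]
    constructor
    · rintro ⟨hm, hmj⟩
      exact ⟨by_contra fun h => hlast m (by omega) hm hmj, hmj⟩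
    · rintro ⟨hm, hmj⟩
      exact ⟨by omega, hmj⟩
  rw [pullCount, pullCount, hrange, range_add_one, filter_insert, if_pos hlj,
    card_insert_of_notMem (by simp)]

theorem le_card_mul_pullCount_of_forall_le [Fintype ι] {n : ℕ} {J : ι}
    (hJ : ∀ i, pullCount I n i ≤ pullCount I n J) : n ≤ Fintype.card ι * pullCount I n J := by
  calc n = ∑ i, pullCount I n i := (sum_pullCount I n).symm
    _ ≤ Fintype.card ι • pullCount I n J := sum_le_card_nsmul _ _ _ fun i _ => hJ i

end Greedy

open Greedy in
theorem greedy_allocation_pull_lower_bound_general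
    {ι : Type*} [Fintype ι] [DecidableEq ι]
    (k : ℕ) (hk : Fintype.card ι = k)
    (n : ℕ) (U : ℕ → ι → ℝ) (hU : ∀ t i, 0 < U t i)
    (I : ℕ → ι)
    (N : ℕ → ι → ℕ)
    (hN : ∀ t i, N t i = ((Finset.range t).filter (fun m => I m = i)).card)
    (hgreedy : ∀ t < n, ∀ j : ι,
      ENNReal.ofReal (U t j) / (N t j : ℝ≥0∞)
        ≤ ENNReal.ofReal (U t (I t)) / (N t (I t) : ℝ≥0∞))
    (J : ι) (hJ : ∀ i : ι, N n i ≤ N n J)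
    (l : ℕ) (hl : l < n) (hlJ : I l = J)
    (hlast : ∀ t, l < t → t < n → I t ≠ J) :
    ∀ i : ι, (N n i : ℝ) ≥ U l i / U l J * ((n : ℝ) / k - 1) := by
  intro i
  obtain rfl : N = pullCount I := funext₂ hN
  have hJ_last := pullCount_eq_succ_of_last I hl hlJ hlast
  have hpigeon : (n : ℝ) ≤ k * (pullCount I l J + 1) := by
    exact_mod_cast hk ▸ hJ_last ▸ le_card_mul_pullCount_of_forall_le I hJ
  have hc : (n : ℝ) / k - 1 ≤ pullCount I l J :=
    sub_le_iff_le_add.2 (div_le_of_le_mul₀ k.cast_nonneg (by positivity) (by linarith))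
  have hcross : U l i * pullCount I l J ≤ U l J * pullCount I l i := by
    have := hgreedy l hl i
    rw [hlJ] at this
    exact ENNReal.mul_le_mul_of_ofReal_div_natCast_le (hU l J).le this
  calc U l i / U l J * ((n : ℝ) / k - 1)
      ≤ U l i / U l J * pullCount I l J := by gcongr; exact (div_pos (hU l i) (hU l J)).le
    _ ≤ pullCount I l i := by
      rw [div_mul_eq_mul_div, div_le_iff₀ (hU l J)]; linarith
    _ ≤ pullCount I n i := by exact_mod_cast pullCount_mono I hl.le i

/-- Greedy sequential allocation over a finite type of `k` arms with
budget `n` rounds and time-varying positive weights `U t i`: in each round `t < n` the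
pulled arm `I t` maximizes `U t i / N t i`, where `N t i = #{ℓ < t : I ℓ = i}` is the
number of pulls of arm `i` before round `t` (convention `x / 0 = ∞`, in `ℝ≥0∞`).
If `J` is an arm with maximal total pulls and `ℓ` is the last round with `I ℓ = J`, then
every arm `i` satisfies `N_i ≥ (U ℓ i / U ℓ J) · (n / k − 1)`. -/
theorem greedy_allocation_pull_lower_bound
    {ι : Type*} [Fintype ι] [DecidableEq ι] [Nonempty ι]
    (k : ℕ) (hk : Fintype.card ι = k)
    (n : ℕ) (U : ℕ → ι → ℝ) (hU : ∀ t i, 0 < U t i)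
    (I : ℕ → ι)
    (N : ℕ → ι → ℕ)
    (hN : ∀ t i, N t i = ((Finset.range t).filter (fun m => I m = i)).card)
    (hgreedy : ∀ t < n, ∀ j : ι,
      ENNReal.ofReal (U t j) / (N t j : ℝ≥0∞)
        ≤ ENNReal.ofReal (U t (I t)) / (N t (I t) : ℝ≥0∞))
    (J : ι) (hJ : ∀ i : ι, N n i ≤ N n J)
    (l : ℕ) (hl : l < n) (hlJ : I l = J)
    (hlast : ∀ t, l < t → t < n → I t ≠ J) :
    ∀ i : ι, (N n i : ℝ) ≥ U l i / U l J * ((n : ℝ) / k - 1) :=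
  greedy_allocation_pull_lower_bound_general k hk n U hU I N hN hgreedy J hJ l hl hlJ hlast
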